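/- arXiv:1601.05015 — 3 statements merged into one kernel-verified Lean document; each statement's English description precedes it below -/
import Mathlib

section
/- Let a, b, h be real numbers with h ≥ 0, b(7a+10b) ≠ 0, and |2(9a² − 10ab − 4b²)| < |b(7a+10b)|. Let α* be a real number with cos(2α*) = 2(9a² − 10ab − 4b²)/(b(7a+10b)). Then f21(√(2h), α*) = 0 and f22(√(2h), α*) = 0. -/
/-- The first component of the second-order averaged function of the harmonic
oscillator perturbed by the quintic potential `(a/5)x⁵ + bx³y²` at energy `h`. -/
noncomputable def f21 (a b h r α : ℝ) : ℝ :=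
  (1 / 320) * b * r ^ 3 * (r ^ 2 - 2 * h) * Real.sin (2 * α) *
    (-240 * b * h + (-49 * a + 50 * b) * r ^ 2 +
      90 * b * (r ^ 2 - 2 * h) * Real.cos (2 * α))

/-- The second component of the second-order averaged function of the harmonic
oscillator perturbed by the quintic potential `(a/5)x⁵ + bx³y²` at energy `h`. -/
noncomputable def f22 (a b h r α : ℝ) : ℝ :=
  (1 / 160) * r ^ 2 *
    (564 * b ^ 2 * h ^ 2 + 420 * a * b * h * r ^ 2 - 678 * b ^ 2 * h * r ^ 2 +
      63 * a ^ 2 * r ^ 4 - 280 * a * b * r ^ 4 + 170 * b ^ 2 * r ^ 4 +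
      b * (49 * a * r ^ 2 * (3 * h - 2 * r ^ 2) +
        10 * b * (48 * h ^ 2 - 51 * h * r ^ 2 + 10 * r ^ 4)) * Real.cos (2 * α) +
      45 * b ^ 2 * (2 * h ^ 2 - 3 * h * r ^ 2 + r ^ 4) * Real.cos (4 * α))

/-!
On the circle `r² = 2h` the factor `r² − 2h` kills `f21` and the `cos 4α` coefficient
`2h² − 3hr² + r⁴` of `f22`, so `f22` becomes affine in `cos 2α`, with root exactly
`2(9a² − 10ab − 4b²)/(b(7a+10b))`.
-/

theorem f21_eq_zero_of_sq_eq {a b h r : ℝ} (hr : r ^ 2 = 2 * h) (α : ℝ) :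
    f21 a b h r α = 0 := by
  unfold f21
  rw [hr]
  ring

theorem f22_eq_of_sq_eq {a b h r : ℝ} (hr : r ^ 2 = 2 * h) (α : ℝ) :
    f22 a b h r α = 7 / 40 * h ^ 3 *
      (2 * (9 * a ^ 2 - 10 * a * b - 4 * b ^ 2) - b * (7 * a + 10 * b) * Real.cos (2 * α)) := by
  have hr4 : r ^ 4 = 4 * h ^ 2 := by rw [show r ^ 4 = (r ^ 2) ^ 2 by ring, hr]; ring
  unfold f22
  rw [show 4 * α = 2 * (2 * α) by ring, Real.cos_two_mul (2 * α), hr4, hr]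
  ring

theorem zero_on_circle_r_sqrt_two_h_general (a b h α : ℝ) (hh : 0 ≤ h)
    (hb : b * (7 * a + 10 * b) ≠ 0)
    (hα : Real.cos (2 * α) =
      2 * (9 * a ^ 2 - 10 * a * b - 4 * b ^ 2) / (b * (7 * a + 10 * b))) :
    f21 a b h (Real.sqrt (2 * h)) α = 0 ∧ f22 a b h (Real.sqrt (2 * h)) α = 0 := by
  have hr : Real.sqrt (2 * h) ^ 2 = 2 * h := Real.sq_sqrt (by linarith)
  have hcos : b * (7 * a + 10 * b) * Real.cos (2 * α) =
      2 * (9 * a ^ 2 - 10 * a * b - 4 * b ^ 2) := by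
    rw [hα, mul_div_cancel₀ _ hb]
  refine ⟨f21_eq_zero_of_sq_eq hr α, ?_⟩
  rw [f22_eq_of_sq_eq hr, hcos, sub_self, mul_zero]

/-- If `|2(9a² − 10ab − 4b²)| < |b(7a+10b)|` and `cos(2α*)` equals
`2(9a² − 10ab − 4b²)/(b(7a+10b))`, then `(√(2h), α*)` is a zero of `(f21, f22)`. -/
theorem zero_on_circle_r_sqrt_two_h (a b h α : ℝ) (hh : 0 ≤ h)
    (hb : b * (7 * a + 10 * b) ≠ 0)
    (hlt : |2 * (9 * a ^ 2 - 10 * a * b - 4 * b ^ 2)| < |b * (7 * a + 10 * b)|)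
    (hα : Real.cos (2 * α) =
      2 * (9 * a ^ 2 - 10 * a * b - 4 * b ^ 2) / (b * (7 * a + 10 * b))) :
    f21 a b h (Real.sqrt (2 * h)) α = 0 ∧ f22 a b h (Real.sqrt (2 * h)) α = 0 :=
  zero_on_circle_r_sqrt_two_h_general a b h α hh hb hα
end

section
/- Let a, b, h, r be real numbers with b − a ≠ 0 and r² = 3bh/(b−a). Then f21(r, 0) = 0, f22(r, 0) = 0, f21(r, π) = 0 and f22(r, π) = 0. -/
/- On the axis `cos 2α = 1` (i.e. `α ∈ πℤ`) the first component vanishes identically and the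
second one factors; `r² = 3bh/(b−a)` is exactly the vanishing of one of the factors. -/

open Real

theorem f21_eq_zero_of_sin_two_mul_eq_zero (a b h r : ℝ) {α : ℝ} (hα : sin (2 * α) = 0) :
    f21 a b h r α = 0 := by
  simp only [f21, hα, mul_zero, zero_mul]

theorem f22_eq_of_cos_two_mul_eq_one (a b h r : ℝ) {α : ℝ} (hα : cos (2 * α) = 1) :
    f22 a b h r α =
      63 / 160 * r ^ 2 * ((5 * b - a) * r ^ 2 - 6 * b * h) * ((b - a) * r ^ 2 - 3 * b * h) := by
  have hcos4 : cos (4 * α) = 1 := by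
    rw [show 4 * α = 2 * (2 * α) by ring, cos_two_mul, hα]
    norm_num
  rw [f22, hα, hcos4]
  ring

/-- If `r² = 3bh/(b−a)`, then `(r, 0)` and `(r, π)` are zeros of `(f21, f22)`. -/
theorem zero_of_type_two (a b h r : ℝ) (hba : b - a ≠ 0)
    (hr : r ^ 2 = 3 * b * h / (b - a)) :
    f21 a b h r 0 = 0 ∧ f22 a b h r 0 = 0 ∧
    f21 a b h r Real.pi = 0 ∧ f22 a b h r Real.pi = 0 := by
  have hfactor : (b - a) * r ^ 2 - 3 * b * h = 0 := by
    rw [eq_div_iff hba] at hr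
    linarith
  have hf22 {α : ℝ} (hα : cos (2 * α) = 1) : f22 a b h r α = 0 := by
    rw [f22_eq_of_cos_two_mul_eq_one a b h r hα, hfactor, mul_zero]
  refine ⟨f21_eq_zero_of_sin_two_mul_eq_zero a b h r (by simp), hf22 (by simp),
    f21_eq_zero_of_sin_two_mul_eq_zero a b h r sin_two_pi, hf22 cos_two_pi⟩
end

section
/- Let a, b, h, r be real numbers with 5b − a ≠ 0 and r² = 6bh/(5b−a). Then ∂f21/∂α (r, 0) = (63/40)·b²·h²·(a−2b)·(a−10b)·r³/(5b−a)², ∂f22/∂r (r, 0) = −(567/40)·r·b²·h²·(a+3b)/(5b−a), and the Jacobian determinant satisfies J(r, 0) = (35721/1600)·b⁴·h⁴·(a−2b)·(a−10b)·(a+3b)·r⁴/(5b−a)³. In particular, if h > 0, r > 0 and b·(a−2b)·(a−10b)·(a+3b) ≠ 0, then J(r, 0) ≠ 0. -/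
/-- The Jacobian determinant of `(f21, f22)` with respect to `(r, α)`. -/
noncomputable def Jac (a b h r α : ℝ) : ℝ :=
  deriv (fun r' => f21 a b h r' α) r * deriv (fun α' => f22 a b h r α') α -
    deriv (fun α' => f21 a b h r α') α * deriv (fun r' => f22 a b h r' α) r

theorem deriv_eq_zero_of_even {f : ℝ → ℝ} (hf : f.Even) : deriv f 0 = 0 := by
  have h := deriv_comp_neg (f := f) (x := 0)
  rw [show (fun x => f (-x)) = f from funext hf, neg_zero] at h
  linarith

theorem deriv_const_mul_sin_mul_at_zero (c k : ℝ) {g : ℝ → ℝ} (hg : DifferentiableAt ℝ g 0) :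
    deriv (fun x => c * Real.sin (k * x) * g x) 0 = c * k * g 0 := by
  have hsin : HasDerivAt (fun x => Real.sin (k * x)) k 0 := by
    simpa using ((hasDerivAt_id (0 : ℝ)).const_mul k).sin
  exact ((hsin.const_mul c).mul hg.hasDerivAt).deriv.trans (by simp)

theorem deriv_f21_r_zero (a b h r : ℝ) : deriv (fun r' => f21 a b h r' 0) r = 0 := by
  simp [f21]

theorem deriv_f22_alpha_zero (a b h r : ℝ) : deriv (fun α' => f22 a b h r α') 0 = 0 :=
  deriv_eq_zero_of_even fun α => by simp only [f22, mul_neg, Real.cos_neg]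

theorem deriv_f21_alpha_zero (a b h r : ℝ) :
    deriv (fun α' => f21 a b h r α') 0 =
      (7 / 160) * b * r ^ 3 * (r ^ 2 - 2 * h) * ((20 * b - 7 * a) * r ^ 2 - 60 * b * h) := by
  unfold f21
  rw [deriv_const_mul_sin_mul_at_zero _ _ (by fun_prop)]
  simp only [mul_zero, Real.cos_zero]
  ring

theorem deriv_f22_r_zero (a b h r : ℝ) :
    deriv (fun r' => f22 a b h r' 0) r =
      (63 / 80) * r * (18 * b ^ 2 * h ^ 2 + (18 * a * b * h - 42 * b ^ 2 * h) * r ^ 2 +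
        3 * (a - b) * (a - 5 * b) * r ^ 4) := by
  have hpoly : (fun r' => f22 a b h r' 0) = fun r' => (63 / 160) * (18 * b ^ 2 * h ^ 2 * r' ^ 2 +
      (9 * a * b * h - 21 * b ^ 2 * h) * r' ^ 4 + (a - b) * (a - 5 * b) * r' ^ 6) := by
    funext r'
    simp only [f22, mul_zero, Real.cos_zero]
    ring
  rw [hpoly]
  refine ((((hasDerivAt_pow 2 r).const_mul _).add ((hasDerivAt_pow 4 r).const_mul _)).add
    ((hasDerivAt_pow 6 r).const_mul _)).const_mul (63 / 160) |>.deriv.trans ?_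
  push_cast
  ring

theorem Jac_zero (a b h r : ℝ) :
    Jac a b h r 0 = -(deriv (fun α' => f21 a b h r α') 0 * deriv (fun r' => f22 a b h r' 0) r) := by
  rw [Jac, deriv_f21_r_zero, deriv_f22_alpha_zero]
  ring

theorem deriv_f21_alpha_zero_of_type_three {a b h r : ℝ} (hba : 5 * b - a ≠ 0)
    (hr : r ^ 2 * (5 * b - a) = 6 * b * h) :
    deriv (fun α' => f21 a b h r α') 0 =
      (63 / 40) * b ^ 2 * h ^ 2 * (a - 2 * b) * (a - 10 * b) * r ^ 3 / (5 * b - a) ^ 2 := by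
  have h₁ : (r ^ 2 - 2 * h) * (5 * b - a) = 2 * h * (a - 2 * b) := by linear_combination hr
  have h₂ : ((20 * b - 7 * a) * r ^ 2 - 60 * b * h) * (5 * b - a) = 18 * b * h * (a - 10 * b) := by
    linear_combination (20 * b - 7 * a) * hr
  rw [deriv_f21_alpha_zero, eq_div_iff (pow_ne_zero 2 hba)]
  linear_combination (7 / 160) * b * r ^ 3 *
    (((20 * b - 7 * a) * r ^ 2 - 60 * b * h) * (5 * b - a) * h₁ + 2 * h * (a - 2 * b) * h₂)

theorem deriv_f22_r_zero_of_type_three {a b h r : ℝ} (hba : 5 * b - a ≠ 0)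
    (hr : r ^ 2 * (5 * b - a) = 6 * b * h) :
    deriv (fun r' => f22 a b h r' 0) r =
      -(567 / 40) * r * b ^ 2 * h ^ 2 * (a + 3 * b) / (5 * b - a) := by
  have hQ : (18 * b ^ 2 * h ^ 2 + (18 * a * b * h - 42 * b ^ 2 * h) * r ^ 2 +
      3 * (a - b) * (a - 5 * b) * r ^ 4) * (5 * b - a) = -18 * b ^ 2 * h ^ 2 * (a + 3 * b) := by
    linear_combination
      (18 * a * b * h - 42 * b ^ 2 * h - 3 * (a - b) * (r ^ 2 * (5 * b - a) + 6 * b * h)) * hr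
  rw [deriv_f22_r_zero, eq_div_iff hba]
  linear_combination (63 / 80) * r * hQ

/-- Off-diagonal Jacobian entries and Jacobian determinant at the zero of type
(3), where `r² = 6bh/(5b−a)` and `α = 0`; the determinant is nonzero when
`h > 0`, `r > 0` and `b(a−2b)(a−10b)(a+3b) ≠ 0`. -/
theorem jacobian_at_type_three (a b h r : ℝ) (hba : 5 * b - a ≠ 0)
    (hr : r ^ 2 = 6 * b * h / (5 * b - a)) :
    deriv (fun α' => f21 a b h r α') 0 =
      (63 / 40) * b ^ 2 * h ^ 2 * (a - 2 * b) * (a - 10 * b) * r ^ 3 /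
        (5 * b - a) ^ 2 ∧
    deriv (fun r' => f22 a b h r' 0) r =
      -(567 / 40) * r * b ^ 2 * h ^ 2 * (a + 3 * b) / (5 * b - a) ∧
    Jac a b h r 0 =
      (35721 / 1600) * b ^ 4 * h ^ 4 * (a - 2 * b) * (a - 10 * b) * (a + 3 * b) *
        r ^ 4 / (5 * b - a) ^ 3 ∧
    (0 < h → 0 < r → b * (a - 2 * b) * (a - 10 * b) * (a + 3 * b) ≠ 0 →
      Jac a b h r 0 ≠ 0) := by
  have hr' : r ^ 2 * (5 * b - a) = 6 * b * h := (eq_div_iff hba).mp hr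
  have hα := deriv_f21_alpha_zero_of_type_three hba hr'
  have hρ := deriv_f22_r_zero_of_type_three hba hr'
  have hJ : Jac a b h r 0 =
      (35721 / 1600) * b ^ 4 * h ^ 4 * (a - 2 * b) * (a - 10 * b) * (a + 3 * b) *
        r ^ 4 / (5 * b - a) ^ 3 := by
    rw [Jac_zero, hα, hρ]
    field_simp
    ring
  refine ⟨hα, hρ, hJ, fun hh hr₀ hne => ?_⟩
  simp only [mul_ne_zero_iff] at hne
  obtain ⟨⟨⟨hb, h₂⟩, h₁₀⟩, h₃⟩ := hne
  rw [hJ]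
  positivity
end
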